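/- Let à = [[A,B],[C,D]] be an invertible complex block matrix with A and D invertible, suppose T = A^{-1}BD^{-1}C is diagonalizable, and let the two-level preconditioner M^{-1} be defined by Algorithm with block-Jacobi smoother S^{-1} = diag(A^{-1}, D^{-1}), ideal transfers P = [[−A^{-1}B],[I]], R = [−CA^{-1}, I], inherited invertible coarse operator M_0 = RÃP, and m pre- and post-smoothing steps with α_j = 1/(1 − cos(2πj/(2m+1))). Then the spectrum of the preconditioned matrix M^{-1}Ã is contained in {1, 1 − 1/(2m+1)^2}. -/

import Mathlib

open Matrix Finset

/-!
Put `N = S⁻¹Ã - 1 = [[0, A⁻¹B], [D⁻¹C, 0]]`. Each smoothing step is `E_s(α) = 1 - α (1 + N)`, and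
the coarse step is `E_c = [[1, A⁻¹B], [0, 0]]`, an idempotent with `E_c N E_c = N² E_c` and
`N² E_c = E_c N²`. Hence `E_m = q(N) E_c q(N)` with `q(x) = ∏ⱼ (1 - αⱼ (1 + x))`, and
`E_c f(N) E_c = g(N²) E_c` where `2 g(z²) = (1 + z) f(z) + (1 - z) f(-z)`.

For `f = q²` the choice of the `αⱼ` makes `g` the constant `1/(2m+1)²`. The roots of `q` are the
`-cos(2πj/(2m+1))`, so writing `z = -(v + v⁻¹)/2` and using `∏ₖ (1 - ωᵏ) = 2m+1` over the
nontrivial `(2m+1)`-th roots of unity `ωᵏ`, one gets `(2m+1) vᵐ q(z) = (v²ᵐ⁺¹ - 1)/(v - 1)` and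
`(2m+1) (-v)ᵐ q(-z) = (v²ᵐ⁺¹ + 1)/(v + 1)`. Thus `E_m² = E_m/(2m+1)²`, which confines the
spectrum of `E_m` to `{0, 1/(2m+1)²}`.
-/

lemma prod_Icc_one_eq_prod_range {M : Type*} [CommMonoid M] (m : ℕ) (f : ℕ → M) :
    ∏ j ∈ Icc 1 m, f j = ∏ k ∈ range m, f (k + 1) := by
  rw [← Ico_add_one_right_eq_Icc, prod_Ico_eq_prod_range, Nat.add_sub_cancel]
  simp only [add_comm]

lemma prod_Icc_mul_reflect {M : Type*} [CommMonoid M] (m : ℕ) (f : ℕ → M) :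
    ∏ j ∈ Icc 1 m, (f j * f (2 * m + 1 - j)) = ∏ k ∈ range (2 * m), f (k + 1) := by
  rw [prod_mul_distrib, two_mul, prod_range_add, prod_Icc_one_eq_prod_range,
    prod_Icc_one_eq_prod_range, ← prod_range_reflect (fun k => f (m + k + 1)) m]
  congr 1
  refine prod_congr rfl fun k hk => ?_
  rw [mem_range] at hk
  congr 1
  omega

section ListProd

variable {M M' F : Type*} [CommMonoid M] [Monoid M'] [FunLike F M M'] [MonoidHomClass F M M']
  (φ : F) (m : ℕ) (f : ℕ → M)

lemma List.prod_ofFn_map_add_one :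
    (List.ofFn fun i : Fin m => φ (f ((i : ℕ) + 1))).prod = φ (∏ j ∈ Icc 1 m, f j) := by
  rw [prod_Icc_one_eq_prod_range, ← Fin.prod_univ_eq_prod_range (fun i => f (i + 1)),
    ← List.prod_ofFn, map_list_prod, List.map_ofFn]
  rfl

lemma List.prod_ofFn_map_sub :
    (List.ofFn fun i : Fin m => φ (f (m - (i : ℕ)))).prod = φ (∏ j ∈ Icc 1 m, f j) := by
  rw [prod_Icc_one_eq_prod_range, ← prod_range_reflect,
    ← Fin.prod_univ_eq_prod_range (fun i => f (m - 1 - i + 1)), ← List.prod_ofFn, map_list_prod,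
    List.map_ofFn]
  congr 2
  ext i
  simp only [Function.comp_apply]
  congr 2
  omega

end ListProd

namespace Polynomial

/-- `foldSq q` replaces each monomial `X ^ k` of `q` by `X ^ ⌈k/2⌉`; it is the polynomial with
`e q(n) e = (foldSq q)(n²) e` when `e` is idempotent, `e n e = n² e` and `n²` commutes with `e`. -/
noncomputable def foldSq {R : Type*} [Semiring R] (q : R[X]) : R[X] :=
  q.sum fun k a => C a * X ^ ((k + 1) / 2)

lemma two_mul_eval_foldSq {R : Type*} [CommRing R] (q : R[X]) (z : R) :
    2 * (foldSq q).eval (z * z) = (1 + z) * q.eval z + (1 - z) * q.eval (-z) := by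
  rw [foldSq, Polynomial.sum_def, eval_finsetSum, eval_eq_sum, eval_eq_sum, Polynomial.sum_def,
    Polynomial.sum_def, mul_sum, mul_sum, mul_sum, ← sum_add_distrib]
  refine sum_congr rfl fun k _ => ?_
  rw [eval_mul, eval_C, eval_pow, eval_X]
  rcases Nat.even_or_odd' k with ⟨t, rfl | rfl⟩
  · rw [show (2 * t + 1) / 2 = t by omega, (even_two_mul t).neg_pow]
    ring
  · rw [show (2 * t + 1 + 1) / 2 = t + 1 by omega, (odd_two_mul_add_one t).neg_pow]
    ring

lemma foldSq_eq_C {K : Type*} [Field K] [IsAlgClosed K] [NeZero (2 : K)] {q : K[X]} {c : K}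
    (h : ∀ z, (1 + z) * q.eval z + (1 - z) * q.eval (-z) = 2 * c) : foldSq q = C c := by
  refine Polynomial.funext fun x => ?_
  obtain ⟨z, rfl⟩ := IsAlgClosed.exists_eq_mul_self x
  rw [eval_C, ← mul_right_inj' (two_ne_zero' K), two_mul_eval_foldSq, h]

section Sandwich

variable {R A : Type*} [CommSemiring R] [Semiring A] [Algebra R A] {e n : A}
  (he : IsIdempotentElem e) (hene : e * n * e = n * n * e) (hcomm : Commute (n * n) e)
include he hene hcomm

lemma mul_pow_mul_of_isIdempotentElem (k : ℕ) :
    e * n ^ k * e = (n * n) ^ ((k + 1) / 2) * e := by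
  rcases Nat.even_or_odd' k with ⟨t, rfl | rfl⟩
  · rw [show (2 * t + 1) / 2 = t by omega, pow_mul, sq, ← (hcomm.pow_left t).eq, mul_assoc, he.eq]
  · rw [show (2 * t + 1 + 1) / 2 = t + 1 by omega, pow_succ, pow_mul, sq, ← mul_assoc,
      ← (hcomm.pow_left t).eq, mul_assoc, mul_assoc, ← mul_assoc e, hene, ← mul_assoc, ← pow_succ]

lemma mul_aeval_mul_of_isIdempotentElem (q : R[X]) :
    e * aeval n q * e = aeval (n * n) (foldSq q) * e := by
  rw [aeval_def, eval₂_eq_sum, foldSq, Polynomial.sum_def, Polynomial.sum_def, map_sum, mul_sum,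
    sum_mul, sum_mul]
  refine sum_congr rfl fun k _ => ?_
  rw [map_mul, aeval_C, map_pow, aeval_X, ← Algebra.smul_def, ← Algebra.smul_def, mul_smul_comm,
    smul_mul_assoc, smul_mul_assoc, mul_pow_mul_of_isIdempotentElem he hene hcomm]

lemma aeval_mul_mul_aeval_mul_self {q : R[X]} {c : R} (hq : foldSq (q * q) = C c) :
    (aeval n q * e * aeval n q) * (aeval n q * e * aeval n q) =
      c • (aeval n q * e * aeval n q) := by
  calc (aeval n q * e * aeval n q) * (aeval n q * e * aeval n q)
      = aeval n q * (e * aeval n (q * q) * e) * aeval n q := by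
        simp only [map_mul, mul_assoc]
    _ = c • (aeval n q * e * aeval n q) := by
        rw [mul_aeval_mul_of_isIdempotentElem he hene hcomm, hq, aeval_C, ← Algebra.smul_def,
          mul_smul_comm, smul_mul_assoc]

end Sandwich

end Polynomial

open Polynomial

theorem spectrum_subset_of_mul_self_eq_smul {𝕜 A : Type*} [Field 𝕜] [Ring A] [Algebra 𝕜 A]
    {a : A} {c : 𝕜} (h : a * a = c • a) : spectrum 𝕜 a ⊆ {0, c} := by
  nontriviality A
  refine Set.image_subset_iff.mp (spectrum.subset_polynomial_aeval a (X * (X - C c))) |>.trans ?_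
  intro x hx
  have hx0 : x * (x - c) = 0 := by
    simpa [mul_sub, h, Algebra.smul_def, mul_comm c] using hx
  rcases mul_eq_zero.mp hx0 with hx | hx
  · exact Or.inl hx
  · exact Or.inr (sub_eq_zero.mp hx)

theorem spectrum_one_sub_subset_of_mul_self_eq_smul {𝕜 A : Type*} [Field 𝕜] [Ring A]
    [Algebra 𝕜 A] {a : A} {c : 𝕜} (h : a * a = c • a) : spectrum 𝕜 (1 - a) ⊆ {1, 1 - c} := by
  rw [← map_one (algebraMap 𝕜 A), ← spectrum.singleton_sub_eq]
  rintro _ ⟨_, rfl, x, hx, rfl⟩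
  rcases spectrum_subset_of_mul_self_eq_smul h hx with rfl | rfl <;> simp

namespace Matrix

variable {n p R : Type*} [Fintype n] [Fintype p] [DecidableEq n] [DecidableEq p]

section Ring

variable [Ring R] (X : Matrix n p R) (Y : Matrix p n R)

lemma isIdempotentElem_fromBlocks_one_zero :
    IsIdempotentElem (fromBlocks 1 X 0 0 : Matrix (n ⊕ p) (n ⊕ p) R) := by
  simp [IsIdempotentElem, fromBlocks_multiply]

lemma fromBlocks_one_mul_antidiag_mul :
    fromBlocks 1 X 0 0 * fromBlocks 0 X Y 0 * fromBlocks 1 X 0 0 =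
      fromBlocks 0 X Y 0 * fromBlocks 0 X Y 0 * (fromBlocks 1 X 0 0 : Matrix (n ⊕ p) (n ⊕ p) R) := by
  simp [fromBlocks_multiply, Matrix.mul_assoc]

lemma commute_antidiag_mul_self_fromBlocks_one :
    Commute (fromBlocks 0 X Y 0 * fromBlocks 0 X Y 0)
      (fromBlocks 1 X 0 0 : Matrix (n ⊕ p) (n ⊕ p) R) := by
  simp [Commute, SemiconjBy, fromBlocks_multiply, Matrix.mul_assoc]

end Ring

variable [CommRing R] (A : Matrix n n R) (B : Matrix n p R) (C : Matrix p n R) (D : Matrix p p R)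

lemma fromBlocks_inv_mul_fromBlocks (hA : IsUnit A.det) (hD : IsUnit D.det) :
    fromBlocks A⁻¹ 0 0 D⁻¹ * fromBlocks A B C D = 1 + fromBlocks 0 (A⁻¹ * B) (D⁻¹ * C) 0 := by
  rw [fromBlocks_multiply, ← fromBlocks_one, fromBlocks_add]
  simp [nonsing_inv_mul A hA, nonsing_inv_mul D hD]

lemma fromCols_mul_fromBlocks_eq_schur (hA : IsUnit A.det) :
    fromCols (-(C * A⁻¹)) (1 : Matrix p p R) * fromBlocks A B C D =
      fromCols 0 (D - C * (A⁻¹ * B)) := by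
  rw [fromCols_mul_fromBlocks, Matrix.neg_mul, Matrix.neg_mul, Matrix.mul_assoc,
    nonsing_inv_mul A hA, Matrix.mul_one, Matrix.one_mul, Matrix.one_mul, neg_add_cancel,
    Matrix.mul_assoc, neg_add_eq_sub]

lemma one_sub_coarse_correction (hA : IsUnit A.det)
    (hS : IsUnit (fromCols (-(C * A⁻¹)) (1 : Matrix p p R) * fromBlocks A B C D *
      fromRows (-(A⁻¹ * B)) (1 : Matrix p p R)).det) :
    1 - fromRows (-(A⁻¹ * B)) (1 : Matrix p p R) *
        (fromCols (-(C * A⁻¹)) (1 : Matrix p p R) * fromBlocks A B C D *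
          fromRows (-(A⁻¹ * B)) (1 : Matrix p p R))⁻¹ *
        fromCols (-(C * A⁻¹)) (1 : Matrix p p R) * fromBlocks A B C D =
      fromBlocks 1 (A⁻¹ * B) 0 0 := by
  rw [fromCols_mul_fromBlocks_eq_schur A B C D hA, fromCols_mul_fromRows, Matrix.zero_mul,
    zero_add, Matrix.mul_one] at hS ⊢
  rw [Matrix.mul_assoc, fromCols_mul_fromBlocks_eq_schur A B C D hA, mul_fromCols,
    Matrix.mul_zero, Matrix.mul_assoc, nonsing_inv_mul _ hS, Matrix.mul_one, ← fromRows_zero,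
    fromCols_fromRows_eq_fromBlocks, ← fromBlocks_one, sub_eq_add_neg, fromBlocks_neg,
    fromBlocks_add]
  simp

end Matrix

open Complex

noncomputable def smoothingPoly {R : Type*} [CommRing R] (a : R) : R[X] :=
  1 - C a * (1 + X)

@[simp]
lemma eval_smoothingPoly {R : Type*} [CommRing R] (a z : R) :
    (smoothingPoly a).eval z = 1 - a * (1 + z) := by
  simp [smoothingPoly]

lemma two_mul_cos_eq_exp_pow_add_inv (x : ℝ) (j : ℕ) :
    2 * (Real.cos (j * x) : ℂ) = exp (x * I) ^ j + (exp (x * I) ^ j)⁻¹ := by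
  rw [← Complex.exp_nat_mul, ← Complex.exp_neg, ofReal_cos, two_cos]
  push_cast
  ring_nf

lemma two_mul_cos_eq_pow_add_pow {m j : ℕ} (hj : j ≤ 2 * m + 1) :
    2 * (Real.cos (2 * Real.pi * j / (2 * m + 1)) : ℂ) =
      exp (2 * Real.pi * I / (2 * m + 1 : ℕ)) ^ j +
        exp (2 * Real.pi * I / (2 * m + 1 : ℕ)) ^ (2 * m + 1 - j) := by
  have hω : exp (2 * Real.pi * I / (2 * m + 1 : ℕ)) =
      exp ((2 * Real.pi / (2 * m + 1) : ℝ) * I) := by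
    congr 1
    push_cast
    ring
  set ω := exp (2 * Real.pi * I / (2 * m + 1 : ℕ))
  have hinv : ω ^ (2 * m + 1 - j) = (ω ^ j)⁻¹ := by
    refine eq_inv_of_mul_eq_one_right ?_
    rw [← pow_add, Nat.add_sub_cancel' hj]
    exact (isPrimitiveRoot_exp _ (by omega)).pow_eq_one
  rw [hinv, hω, ← two_mul_cos_eq_exp_pow_add_inv]
  congr 3
  ring

lemma smoothing_factor_mul {R : Type*} [CommRing R] {a c z v ζ ζ' : R}
    (hζ : ζ * ζ' = 1) (hc : 2 * c = ζ + ζ') (ha : a * (1 - c) = 1)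
    (hv : v * v + 2 * z * v + 1 = 0) :
    (1 - a * (1 + z)) * (v * ((1 - ζ) * (1 - ζ'))) = (v - ζ) * (v - ζ') := by
  linear_combination (-2 * v * (1 + z)) * ha - a * (1 + z) * v * hc +
    ((1 - a * (1 + z)) * v - 1) * hζ - hv

lemma prod_smoothing_factor_mul {m : ℕ} {α : ℕ → ℂ}
    (hα : ∀ j ∈ Icc 1 m, α j = (1 - (Real.cos (2 * Real.pi * j / (2 * m + 1)) : ℂ))⁻¹)
    {z v : ℂ} (hv : v * v + 2 * z * v + 1 = 0) :
    (∏ j ∈ Icc 1 m, (1 - α j * (1 + z))) * (v ^ m * (2 * m + 1)) =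
      ∏ k ∈ range (2 * m), (v - exp (2 * Real.pi * I / (2 * m + 1 : ℕ)) ^ (k + 1)) := by
  set ω := exp (2 * Real.pi * I / (2 * m + 1 : ℕ))
  have hω : IsPrimitiveRoot ω (2 * m + 1) := isPrimitiveRoot_exp _ (by omega)
  have hfactor : ∀ j ∈ Icc 1 m, (1 - α j * (1 + z)) *
      (v * ((1 - ω ^ j) * (1 - ω ^ (2 * m + 1 - j)))) =
        (v - ω ^ j) * (v - ω ^ (2 * m + 1 - j)) := by
    intro j hj
    have hj' := mem_Icc.mp hj
    set c : ℂ := ((Real.cos (2 * Real.pi * j / (2 * m + 1)) : ℝ) : ℂ)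
    have hζ : ω ^ j * ω ^ (2 * m + 1 - j) = 1 := by
      rw [← pow_add, Nat.add_sub_cancel' (by omega), hω.pow_eq_one]
    have hc : 2 * c = ω ^ j + ω ^ (2 * m + 1 - j) := two_mul_cos_eq_pow_add_pow (by omega)
    have hc1 : 1 - c ≠ 0 := by
      have h2 : (1 - ω ^ j) * (1 - ω ^ (2 * m + 1 - j)) = 2 * (1 - c) := by
        linear_combination hζ + hc
      have h1 : ∀ k, 0 < k → k < 2 * m + 1 → 1 - ω ^ k ≠ 0 := fun k hk hk' =>
        sub_ne_zero.mpr (hω.pow_ne_one_of_pos_of_lt hk.ne' hk').symm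
      intro h
      rw [h, mul_zero] at h2
      exact mul_ne_zero (h1 j (by omega) (by omega)) (h1 _ (by omega) (by omega)) h2
    exact smoothing_factor_mul hζ hc (by rw [hα j hj]; exact inv_mul_cancel₀ hc1) hv
  have horder : ∏ k ∈ range (2 * m), (1 - ω ^ (k + 1)) = 2 * m + 1 := by
    rw [hω.prod_one_sub_pow_eq_order]
    push_cast
    ring
  rw [← horder, ← prod_Icc_mul_reflect m (fun k => 1 - ω ^ k),
    ← prod_Icc_mul_reflect m (fun k => v - ω ^ k), show v ^ m = ∏ _j ∈ Icc 1 m, v by simp,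
    ← prod_mul_distrib, ← prod_mul_distrib]
  exact prod_congr rfl hfactor

lemma sub_one_mul_prod_sub_pow {R : Type*} [CommRing R] [IsDomain R] {n : ℕ} {ω : R}
    (hω : IsPrimitiveRoot ω (n + 1)) (u : R) :
    (u - 1) * ∏ k ∈ range n, (u - ω ^ (k + 1)) = u ^ (n + 1) - 1 := by
  have h := congrArg (eval u) (X_pow_sub_C_eq_prod hω n.succ_pos (one_pow _))
  simp only [prod_range_succ', pow_zero, mul_one, eval_mul, eval_prod, eval_sub, eval_pow,
    eval_X, eval_C] at h
  rw [h, mul_comm]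

lemma smoothing_product_identity {m : ℕ} {α : ℕ → ℂ}
    (hα : ∀ j ∈ Icc 1 m, α j = (1 - (Real.cos (2 * Real.pi * j / (2 * m + 1)) : ℂ))⁻¹)
    (z : ℂ) :
    (1 + z) * (∏ j ∈ Icc 1 m, (1 - α j * (1 + z))) ^ 2 +
      (1 - z) * (∏ j ∈ Icc 1 m, (1 - α j * (1 + -z))) ^ 2 = 2 / (2 * m + 1) ^ 2 := by
  set ω := exp (2 * Real.pi * I / (2 * m + 1 : ℕ))
  have hω : IsPrimitiveRoot ω (2 * m + 1) := isPrimitiveRoot_exp _ (by omega)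
  have hK : (2 * m + 1 : ℂ) ≠ 0 := by exact_mod_cast (2 * m).succ_ne_zero
  obtain ⟨s, hs⟩ := IsAlgClosed.exists_pow_nat_eq (z ^ 2 - 1) two_pos
  set v := s - z
  have hv : v * v + 2 * z * v + 1 = 0 := by linear_combination hs
  have hv0 : v ≠ 0 := by
    rintro h
    simp [h] at hv
  set F := fun u : ℂ => ∏ k ∈ range (2 * m), (u - ω ^ (k + 1))
  have hF (u : ℂ) : (u - 1) * F u = u ^ (2 * m + 1) - 1 := sub_one_mul_prod_sub_pow hω u
  have h1 := prod_smoothing_factor_mul hα hv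
  have h2 := prod_smoothing_factor_mul hα (z := -z) (v := -v) (by linear_combination hv)
  set a := ∏ j ∈ Icc 1 m, (1 - α j * (1 + z))
  set b := ∏ j ∈ Icc 1 m, (1 - α j * (1 + -z))
  have hodd : (-v) ^ (2 * m + 1) = -v ^ (2 * m + 1) := Odd.neg_pow ⟨m, rfl⟩ v
  have heven : ((-v) ^ m) ^ 2 = (v ^ m) ^ 2 := by
    rw [← pow_mul, ← pow_mul, Even.neg_pow ⟨m, by ring⟩]
  -- `2v(1 + z) = -(v - 1)²` and `2v(1 - z) = (v + 1)²`
  have hA : v ^ (2 * m + 1) * ((1 + z) * a ^ 2 * (2 * m + 1) ^ 2) * 2 =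
      -(v ^ (2 * m + 1) - 1) ^ 2 := by
    linear_combination (a * (v ^ m * (2 * m + 1))) ^ 2 * hv
      - (v - 1) ^ 2 * (a * (v ^ m * (2 * m + 1)) + F v) * h1
      - ((v - 1) * F v + v ^ (2 * m + 1) - 1) * hF v
  have hB : v ^ (2 * m + 1) * ((1 - z) * b ^ 2 * (2 * m + 1) ^ 2) * 2 =
      (v ^ (2 * m + 1) + 1) ^ 2 := by
    have hFv := hF (-v)
    rw [hodd] at hFv
    linear_combination -2 * v * (1 - z) * b ^ 2 * (2 * m + 1) ^ 2 * heven
      - (b * ((-v) ^ m * (2 * m + 1))) ^ 2 * hv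
      + (v + 1) ^ 2 * (b * ((-v) ^ m * (2 * m + 1)) + F (-v)) * h2
      + ((-v - 1) * F (-v) - v ^ (2 * m + 1) - 1) * hFv
  rw [eq_div_iff (pow_ne_zero 2 hK)]
  apply mul_left_cancel₀ (pow_ne_zero (2 * m + 1) hv0)
  linear_combination (hA + hB) / 2

theorem two_level_clustering_general
    {n p : Type*} [Fintype n] [Fintype p] [DecidableEq n] [DecidableEq p]
    (A : Matrix n n ℂ) (B : Matrix n p ℂ) (C : Matrix p n ℂ) (D : Matrix p p ℂ)
    (hA : IsUnit A.det) (hD : IsUnit D.det)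
    (m : ℕ) (α : ℕ → ℂ)
    (hα : ∀ j ∈ Finset.Icc 1 m,
      α j = (1 - (Real.cos (2 * Real.pi * j / (2 * m + 1)) : ℂ))⁻¹)
    (hM₀ : IsUnit (Matrix.fromCols (-(C * A⁻¹)) (1 : Matrix p p ℂ) *
        Matrix.fromBlocks A B C D *
        Matrix.fromRows (-(A⁻¹ * B)) (1 : Matrix p p ℂ)).det) :
    let Atil : Matrix (n ⊕ p) (n ⊕ p) ℂ := Matrix.fromBlocks A B C D
    let Sinv : Matrix (n ⊕ p) (n ⊕ p) ℂ := Matrix.fromBlocks A⁻¹ 0 0 D⁻¹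
    let P : Matrix (n ⊕ p) p ℂ := Matrix.fromRows (-(A⁻¹ * B)) (1 : Matrix p p ℂ)
    let R : Matrix p (n ⊕ p) ℂ := Matrix.fromCols (-(C * A⁻¹)) (1 : Matrix p p ℂ)
    let M₀ : Matrix p p ℂ := R * Atil * P
    let Es : ℕ → Matrix (n ⊕ p) (n ⊕ p) ℂ := fun j =>
      (1 : Matrix (n ⊕ p) (n ⊕ p) ℂ) - α j • (Sinv * Atil)
    let Ec : Matrix (n ⊕ p) (n ⊕ p) ℂ :=
      (1 : Matrix (n ⊕ p) (n ⊕ p) ℂ) - P * M₀⁻¹ * R * Atil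
    let Em : Matrix (n ⊕ p) (n ⊕ p) ℂ :=
      (List.ofFn (fun i : Fin m => Es (m - (i : ℕ)))).prod * Ec *
        (List.ofFn (fun i : Fin m => Es ((i : ℕ) + 1))).prod
    spectrum ℂ ((1 : Matrix (n ⊕ p) (n ⊕ p) ℂ) - Em)
      ⊆ {1, 1 - 1 / ((2 * (m : ℂ) + 1) ^ 2)} := by
  intro Atil Sinv P R M₀ Es Ec Em
  set N : Matrix (n ⊕ p) (n ⊕ p) ℂ := fromBlocks 0 (A⁻¹ * B) (D⁻¹ * C) 0
  set q : ℂ[X] := ∏ j ∈ Icc 1 m, smoothingPoly (α j)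
  have hEs (j : ℕ) : Es j = aeval N (smoothingPoly (α j)) := by
    simp [Es, Sinv, Atil, N, fromBlocks_inv_mul_fromBlocks A B C D hA hD, smoothingPoly,
      Algebra.smul_def]
  have hEc : Ec = fromBlocks 1 (A⁻¹ * B) 0 0 := one_sub_coarse_correction A B C D hA hM₀
  have hEm : Em = aeval N q * fromBlocks 1 (A⁻¹ * B) 0 0 * aeval N q := by
    simp only [Em, hEs, hEc]
    rw [List.prod_ofFn_map_sub (aeval N) m (fun j => smoothingPoly (α j)),
      List.prod_ofFn_map_add_one (aeval N) m (fun j => smoothingPoly (α j))]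
  have hq : foldSq (q * q) = Polynomial.C (1 / (2 * (m : ℂ) + 1) ^ 2) := foldSq_eq_C fun z => by
    simp only [q, eval_mul, eval_prod, eval_smoothingPoly]
    linear_combination smoothing_product_identity hα z
  exact spectrum_one_sub_subset_of_mul_self_eq_smul <| hEm ▸
    aeval_mul_mul_aeval_mul_self (isIdempotentElem_fromBlocks_one_zero _)
      (fromBlocks_one_mul_antidiag_mul _ _) (commute_antidiag_mul_self_fromBlocks_one _ _) hq

/-- Clustered spectrum of the symmetric two-level preconditioner: for an
invertible block matrix `Ã` with `A, D` invertible, `T = A⁻¹BD⁻¹C`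
diagonalizable, block-Jacobi smoother, ideal transfers, inherited invertible
coarse operator, and relaxation parameters `α_j = 1/(1 − cos(2πj/(2m+1)))`,
the spectrum of `M⁻¹Ã = I − E_m` is contained in `{1, 1 − 1/(2m+1)²}`. -/
theorem two_level_clustering
    {n p : Type*} [Fintype n] [Fintype p] [DecidableEq n] [DecidableEq p]
    (A : Matrix n n ℂ) (B : Matrix n p ℂ) (C : Matrix p n ℂ) (D : Matrix p p ℂ)
    (hA : IsUnit A.det) (hD : IsUnit D.det)
    (hAtil : IsUnit (Matrix.fromBlocks A B C D).det)
    (hT : ∃ (W : Matrix n n ℂ) (d : n → ℂ), IsUnit W.det ∧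
      A⁻¹ * B * D⁻¹ * C = W * Matrix.diagonal d * W⁻¹)
    (m : ℕ) (hm : 1 ≤ m) (α : ℕ → ℂ)
    (hα : ∀ j ∈ Finset.Icc 1 m,
      α j = (1 - (Real.cos (2 * Real.pi * j / (2 * m + 1)) : ℂ))⁻¹)
    (hM₀ : IsUnit (Matrix.fromCols (-(C * A⁻¹)) (1 : Matrix p p ℂ) *
        Matrix.fromBlocks A B C D *
        Matrix.fromRows (-(A⁻¹ * B)) (1 : Matrix p p ℂ)).det) :
    let Atil : Matrix (n ⊕ p) (n ⊕ p) ℂ := Matrix.fromBlocks A B C D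
    let Sinv : Matrix (n ⊕ p) (n ⊕ p) ℂ := Matrix.fromBlocks A⁻¹ 0 0 D⁻¹
    let P : Matrix (n ⊕ p) p ℂ := Matrix.fromRows (-(A⁻¹ * B)) (1 : Matrix p p ℂ)
    let R : Matrix p (n ⊕ p) ℂ := Matrix.fromCols (-(C * A⁻¹)) (1 : Matrix p p ℂ)
    let M₀ : Matrix p p ℂ := R * Atil * P
    let Es : ℕ → Matrix (n ⊕ p) (n ⊕ p) ℂ := fun j =>
      (1 : Matrix (n ⊕ p) (n ⊕ p) ℂ) - α j • (Sinv * Atil)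
    let Ec : Matrix (n ⊕ p) (n ⊕ p) ℂ :=
      (1 : Matrix (n ⊕ p) (n ⊕ p) ℂ) - P * M₀⁻¹ * R * Atil
    let Em : Matrix (n ⊕ p) (n ⊕ p) ℂ :=
      (List.ofFn (fun i : Fin m => Es (m - (i : ℕ)))).prod * Ec *
        (List.ofFn (fun i : Fin m => Es ((i : ℕ) + 1))).prod
    spectrum ℂ ((1 : Matrix (n ⊕ p) (n ⊕ p) ℂ) - Em)
      ⊆ {1, 1 - 1 / ((2 * (m : ℂ) + 1) ^ 2)} :=
  two_level_clustering_general A B C D hA hD m α hα hM₀
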